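/- arXiv:2307.06522 — 4 statements merged into one kernel-verified Lean document; each statement's English description precedes it below -/
import Mathlib

section
/- (Hurwitz) If a is a positive integer and there exist positive integers x, y, z with x² + y² + z² = a·x·y·z, then a = 1 or a = 3. -/
/-!
Vieta jumping. For fixed `x, y`, the equation is a quadratic in `z` whose second root
`z' = a x y - z` satisfies `z z' = x² + y²`, so it is again a positive solution. Replacing the
largest coordinate by its partner lowers `x + y + z` unless `z ≤ z'`, so some solution
`x ≤ y ≤ z` has `z ≤ z'`. For it, `(z - y)(z' - y) ≥ 0` expands to `x² ≥ (a x - 2) y²`, which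
(together with `x ≤ y`, and `a x ≥ 3` since `a x ≤ 2` would give `x² + (y - z)² ≤ 0`) forces
`x = y` and `a x = 3`.
-/

def HurwitzSolution (a x y z : ℤ) : Prop :=
  0 < x ∧ 0 < y ∧ 0 < z ∧ x ^ 2 + y ^ 2 + z ^ 2 = a * x * y * z

namespace HurwitzSolution

variable {a x y z : ℤ}

theorem swap_left (h : HurwitzSolution a x y z) : HurwitzSolution a y x z := by
  obtain ⟨hx, hy, hz, heq⟩ := h
  exact ⟨hy, hx, hz, by linear_combination heq⟩

theorem swap_right (h : HurwitzSolution a x y z) : HurwitzSolution a x z y := by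
  obtain ⟨hx, hy, hz, heq⟩ := h
  exact ⟨hx, hz, hy, by linear_combination heq⟩

theorem exists_sorted (h : HurwitzSolution a x y z) :
    ∃ u v w, HurwitzSolution a u v w ∧ u ≤ v ∧ v ≤ w ∧ u + v + w = x + y + z := by
  rcases le_total x y with _ | _ <;> rcases le_total y z with _ | _ <;>
    rcases le_total x z with _ | _ <;>
    first
    | exact ⟨x, y, z, h, ‹_›, ‹_›, by ring⟩
    | exact ⟨x, z, y, h.swap_right, ‹_›, ‹_›, by ring⟩
    | exact ⟨y, x, z, h.swap_left, ‹_›, ‹_›, by ring⟩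
    | exact ⟨y, z, x, h.swap_left.swap_right, ‹_›, ‹_›, by ring⟩
    | exact ⟨z, x, y, h.swap_right.swap_left, ‹_›, ‹_›, by ring⟩
    | exact ⟨z, y, x, h.swap_left.swap_right.swap_left, ‹_›, ‹_›, by ring⟩

theorem vieta (h : HurwitzSolution a x y z) : HurwitzSolution a x y (a * x * y - z) := by
  obtain ⟨hx, hy, hz, heq⟩ := h
  have hprod : z * (a * x * y - z) = x ^ 2 + y ^ 2 := by linear_combination -heq
  have hpos : 0 < z * (a * x * y - z) := by rw [hprod]; positivity
  exact ⟨hx, hy, pos_of_mul_pos_right hpos hz.le, by linear_combination heq⟩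

theorem mul_eq_three_of_reduced (h : HurwitzSolution a x y z) (hxy : x ≤ y) (hyz : y ≤ z)
    (hred : z ≤ a * x * y - z) : a * x = 3 := by
  obtain ⟨hx, hy, hz, heq⟩ := h
  have hroots : 0 ≤ x ^ 2 + (2 - a * x) * y ^ 2 := by
    have := mul_nonneg (sub_nonneg.2 hyz) (sub_nonneg.2 (hyz.trans hred))
    linear_combination this - heq
  have hax : 3 ≤ a * x := by
    by_contra! hax
    have : a * x * (y * z) ≤ 2 * (y * z) := by gcongr; omega
    nlinarith [sq_nonneg (y - z)]
  have hxy' : x = y := le_antisymm hxy (by nlinarith)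
  subst hxy'
  nlinarith

theorem eq_one_or_three {x y z : ℤ} (h : HurwitzSolution a x y z) : a = 1 ∨ a = 3 := by
  obtain ⟨u, v, w, hs, huv, hvw, hsum⟩ := h.exists_sorted
  obtain ⟨hu, hv, hw', -⟩ := hs.vieta
  rcases le_or_gt w (a * u * v - w) with hred | hdesc
  · have h3 := hs.mul_eq_three_of_reduced huv hvw hred
    have : u ≤ 3 := Int.le_of_dvd (by norm_num) (Dvd.intro_left a h3)
    interval_cases u <;> omega
  · have : (u + v + (a * u * v - w)).toNat < (x + y + z).toNat := by omega
    exact hs.vieta.eq_one_or_three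
termination_by (x + y + z).toNat

end HurwitzSolution

theorem stmt_2_general (a : ℤ)
    (h : ∃ x y z : ℤ, 0 < x ∧ 0 < y ∧ 0 < z ∧
      x ^ 2 + y ^ 2 + z ^ 2 = a * x * y * z) :
    a = 1 ∨ a = 3 := by
  obtain ⟨x, y, z, h⟩ := h
  exact HurwitzSolution.eq_one_or_three h

/-- (Hurwitz) If `a` is a positive integer and there exist positive integers
`x, y, z` with `x² + y² + z² = a·x·y·z`, then `a = 1` or `a = 3`. -/
theorem stmt_2 (a : ℤ) (ha : 0 < a)
    (h : ∃ x y z : ℤ, 0 < x ∧ 0 < y ∧ 0 < z ∧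
      x ^ 2 + y ^ 2 + z ^ 2 = a * x * y * z) :
    a = 1 ∨ a = 3 :=
  stmt_2_general a h
end

section
/- If (a, b, c) are positive integers with a² + b² + c² = 3abc, then a, b, c are pairwise coprime. -/
/-- Hurwitz-type descent: `x² + y² + z² = k·xyz` has no positive solutions for `k ≥ 5`. -/
lemma markov_aux (k : ℤ) (hk : 5 ≤ k) :
    ∀ n : ℕ, ∀ x y z : ℤ, x + y + z ≤ n → 0 < x → 0 < y → 0 < z →
      x ^ 2 + y ^ 2 + z ^ 2 = k * x * y * z → False := by
  intro n
  induction n with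
  | zero => intro x y z hn hx hy hz _; omega
  | succ n ih =>
    intro x y z hn hx hy hz heq
    have H : ∀ X Y Z : ℤ, X + Y + Z ≤ (n + 1 : ℕ) → 0 < X → 0 < Y → 0 < Z →
        Y ≤ X → Z ≤ Y → X ^ 2 + Y ^ 2 + Z ^ 2 = k * X * Y * Z → False := by
      intro X Y Z hS hX hY hZ hYX hZY hE
      set X' := k * Y * Z - X with hX'
      have hE' : X' ^ 2 + Y ^ 2 + Z ^ 2 = k * X' * Y * Z := by
        linear_combination hE + (X' - X) * hX'
      have hmul : X * X' = Y ^ 2 + Z ^ 2 := by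
        linear_combination (-1 : ℤ) * hE + X * hX'
      have hX'pos : 0 < X' := by nlinarith [mul_pos hY hY, mul_pos hZ hZ]
      rcases lt_or_ge X' X with hlt | hle
      · exact ih X' Y Z (by omega) hX'pos hY hZ hE'
      · have h1 : X ^ 2 ≤ Y ^ 2 + Z ^ 2 := by nlinarith
        nlinarith [mul_pos hX hY, mul_pos (mul_pos hX hY) hZ,
          mul_le_mul_of_nonneg_left hYX hY.le, mul_le_mul_of_nonneg_left hZY hZ.le]
    rcases le_total x y with h1 | h1 <;> rcases le_total x z with h2 | h2 <;>
      rcases le_total y z with h3 | h3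
    · exact H z y x (by omega) hz hy hx (by omega) (by omega) (by linear_combination heq)
    · exact H y z x (by omega) hy hz hx (by omega) (by omega) (by linear_combination heq)
    · exact H x y z (by omega) hx hy hz (by omega) (by omega) heq
    · exact H y x z (by omega) hy hx hz (by omega) (by omega) (by linear_combination heq)
    · exact H z x y (by omega) hz hx hy (by omega) (by omega) (by linear_combination heq)
    · exact H z x y (by omega) hz hx hy (by omega) (by omega) (by linear_combination heq)
    · exact H x z y (by omega) hx hz hy (by omega) (by omega) (by linear_combination heq)
    · exact H x y z (by omega) hx hy hz (by omega) (by omega) heq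

lemma markov_cop (a b c : ℤ) (ha : 0 < a) (hb : 0 < b) (hc : 0 < c)
    (h : a ^ 2 + b ^ 2 + c ^ 2 = 3 * a * b * c) : IsCoprime a b := by
  rw [Int.isCoprime_iff_gcd_eq_one]
  by_contra hg
  obtain ⟨p, hp, hpd⟩ := Nat.exists_prime_and_dvd hg
  have hpa : (p : ℤ) ∣ a := dvd_trans (Int.natCast_dvd_natCast.mpr hpd) (Int.gcd_dvd_left _ _)
  have hpb : (p : ℤ) ∣ b := dvd_trans (Int.natCast_dvd_natCast.mpr hpd) (Int.gcd_dvd_right _ _)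
  have hpz : Prime (p : ℤ) := Nat.prime_iff_prime_int.mp hp
  have h2 : (p : ℤ) ∣ c ^ 2 := by
    have e : c ^ 2 = 3 * a * b * c - a ^ 2 - b ^ 2 := by linarith
    rw [e]
    exact dvd_sub (dvd_sub (((hpa.mul_left 3).mul_right b).mul_right c)
      (dvd_pow hpa two_ne_zero)) (dvd_pow hpb two_ne_zero)
  have hpc : (p : ℤ) ∣ c := hpz.dvd_of_dvd_pow h2
  obtain ⟨x, hxe⟩ := hpa
  obtain ⟨y, hye⟩ := hpb
  obtain ⟨z, hze⟩ := hpc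
  have hp0 : (0 : ℤ) < (p : ℤ) := by exact_mod_cast hp.pos
  have hx : 0 < x := by nlinarith
  have hy : 0 < y := by nlinarith
  have hz : 0 < z := by nlinarith
  have hcancel : ((p : ℤ)) ^ 2 * (x ^ 2 + y ^ 2 + z ^ 2) =
      ((p : ℤ)) ^ 2 * ((3 * (p : ℤ)) * x * y * z) := by
    subst hxe hye hze
    linear_combination h
  have heq : x ^ 2 + y ^ 2 + z ^ 2 = (3 * (p : ℤ)) * x * y * z :=
    mul_left_cancel₀ (pow_ne_zero 2 hp0.ne') hcancel
  have hk : (5 : ℤ) ≤ 3 * (p : ℤ) := by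
    have := hp.two_le
    omega
  exact markov_aux (3 * (p : ℤ)) hk (x + y + z).toNat x y z
    (Int.self_le_toNat _) hx hy hz heq

/-- If `(a, b, c)` are positive integers with `a² + b² + c² = 3abc`, then
`a, b, c` are pairwise coprime. -/
theorem stmt_3 (a b c : ℤ) (ha : 0 < a) (hb : 0 < b) (hc : 0 < c)
    (h : a ^ 2 + b ^ 2 + c ^ 2 = 3 * a * b * c) :
    IsCoprime a b ∧ IsCoprime a c ∧ IsCoprime b c :=
  ⟨markov_cop a b c ha hb hc h,
   markov_cop a c b ha hc hb (by linear_combination h),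
   markov_cop b c a hb hc ha (by linear_combination h)⟩
end

section
/- Let b ≤ c be positive integers with 1 + b² + c² = 3bc. Then there exists n ≥ 0 such that b = d_n and c = d_{n+1}, where (d_n) is the sequence with d_0 = d_1 = 1 and d_{n+1} = 3·d_n − d_{n−1}. -/
/-!
Descent on the larger entry. Viewing `1 + b² + c² = 3bc` as a quadratic in `c`, its other root is
`c' = 3b - c`, with `c c' = b² + 1`. If `b < c`, this product forces `0 < c' ≤ b`, so `(c', b)` is a
smaller solution, and `c = 3b - c'` extends its position in the sequence by one step. The descent
ends at `b = c`, where the equation reads `1 + b² = 3b² - b²`, i.e. `b = 1 = d₀ = d₁`.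
-/

theorem markov_vieta_jump {b c : ℤ} (h : 1 + b ^ 2 + c ^ 2 = 3 * b * c) :
    1 + (3 * b - c) ^ 2 + b ^ 2 = 3 * (3 * b - c) * b := by
  linear_combination h

theorem markov_vieta_jump_pos_le {b c : ℤ} (hb : 0 < b) (hbc : b < c)
    (h : 1 + b ^ 2 + c ^ 2 = 3 * b * c) : 0 < 3 * b - c ∧ 3 * b - c ≤ b := by
  have hprod : c * (3 * b - c) = b ^ 2 + 1 := by linear_combination -h
  constructor
  · by_contra! hle
    nlinarith [mul_nonpos_of_nonneg_of_nonpos (hb.trans hbc).le hle]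
  · by_contra! hgt
    nlinarith [mul_le_mul (show b + 1 ≤ c by omega) (show b + 1 ≤ 3 * b - c by omega)
      (by omega) (by omega)]

theorem markov_eq_one_of_eq {b : ℤ} (hb : 0 < b) (h : 1 + b ^ 2 + b ^ 2 = 3 * b * b) : b = 1 := by
  nlinarith

theorem exists_eq_consecutive_of_markov (d : ℕ → ℤ) (h0 : d 0 = 1) (h1 : d 1 = 1)
    (hrec : ∀ n : ℕ, d (n + 2) = 3 * d (n + 1) - d n) {b c : ℤ} (hb : 0 < b) (hbc : b ≤ c)
    (h : 1 + b ^ 2 + c ^ 2 = 3 * b * c) : ∃ n : ℕ, b = d n ∧ c = d (n + 1) := by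
  rcases hbc.eq_or_lt with rfl | hlt
  · have hb1 := markov_eq_one_of_eq hb h
    exact ⟨0, by rw [h0, hb1], by rw [h1, hb1]⟩
  · obtain ⟨hpos, hle⟩ := markov_vieta_jump_pos_le hb hlt h
    obtain ⟨n, hn, hn'⟩ :=
      exists_eq_consecutive_of_markov d h0 h1 hrec hpos hle (markov_vieta_jump h)
    exact ⟨n + 1, hn', by rw [hrec, ← hn, ← hn']; ring⟩
termination_by c.toNat
decreasing_by omega

theorem stmt_8_general (d : ℕ → ℤ) (h0 : d 0 = 1) (h1 : d 1 = 1)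
    (hrec : ∀ n : ℕ, d (n + 2) = 3 * d (n + 1) - d n)
    (b c : ℤ) (hb : 0 < b) (hbc : b ≤ c)
    (h : 1 + b ^ 2 + c ^ 2 = 3 * b * c) :
    ∃ n : ℕ, b = d n ∧ c = d (n + 1) :=
  exists_eq_consecutive_of_markov d h0 h1 hrec hb hbc h

/-- Let `b ≤ c` be positive integers with `1 + b² + c² = 3bc`. Then there exists
`n ≥ 0` such that `b = d_n` and `c = d_{n+1}`, where `(d_n)` is the sequence with
`d₀ = d₁ = 1` and `d_{n+1} = 3·d_n − d_{n−1}`. -/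
theorem stmt_8 (d : ℕ → ℤ) (h0 : d 0 = 1) (h1 : d 1 = 1)
    (hrec : ∀ n : ℕ, d (n + 2) = 3 * d (n + 1) - d n)
    (b c : ℤ) (hb : 0 < b) (hc : 0 < c) (hbc : b ≤ c)
    (h : 1 + b ^ 2 + c ^ 2 = 3 * b * c) :
    ∃ n : ℕ, b = d n ∧ c = d (n + 1) :=
  stmt_8_general d h0 h1 hrec b c hb hbc h
end

section
/- Let R be a commutative ring and π ∈ R. The quotient ring A = R[s, t]/(st − π) is a free R-module with basis {1} ∪ {s^a : a ≥ 1} ∪ {t^b : b ≥ 1}. In particular, with the ℤ-grading where s has degree 1 and t has degree −1, the degree-0 component of A is exactly the image of R. -/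
open MvPolynomial

/-- The ideal `(st − π)` in the polynomial ring `R[s, t]`, where `s = X 0` and
`t = X 1`. -/
noncomputable def stIdeal (R : Type*) [CommRing R] (π : R) : Ideal (MvPolynomial (Fin 2) R) :=
  Ideal.span {X 0 * X 1 - C π}

namespace StProof

variable {R : Type*} [CommRing R] (π : R)

/-- reduction map to the free module `ℤ →₀ R`. -/
noncomputable def red : MvPolynomial (Fin 2) R →ₗ[R] (ℤ →₀ R) :=
  (Finsupp.lsum R fun d : Fin 2 →₀ ℕ =>
    (Finsupp.lsingle ((d 0 : ℤ) - (d 1 : ℤ))).comp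
      (LinearMap.mulLeft R (π ^ min (d 0) (d 1)))) ∘ₗ
    (AddMonoidAlgebra.coeffLinearEquiv R :
      MvPolynomial (Fin 2) R ≃ₗ[R] ((Fin 2 →₀ ℕ) →₀ R)).toLinearMap

lemma red_monomial (d : Fin 2 →₀ ℕ) (r : R) :
    red π (monomial d r) =
      Finsupp.single ((d 0 : ℤ) - (d 1 : ℤ)) (π ^ min (d 0) (d 1) * r) := by
  rw [← single_eq_monomial]
  exact Finsupp.lsum_single R _ d r

lemma red_ideal : ∀ x ∈ (stIdeal R π).restrictScalars R, red π x = 0 := by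
  intro x hx
  rw [Submodule.restrictScalars_mem, stIdeal, Ideal.mem_span_singleton] at hx
  obtain ⟨p, rfl⟩ := hx
  induction p using MvPolynomial.induction_on' with
  | add p q hp hq => rw [mul_add, map_add, hp, hq, add_zero]
  | monomial u a =>
    have h1 : (X 0 * X 1 : MvPolynomial (Fin 2) R) * monomial u a =
        monomial (Finsupp.single 0 1 + Finsupp.single 1 1 + u) a := by
      rw [X, X, monomial_mul, monomial_mul, one_mul, one_mul]
    have h2 : (C π : MvPolynomial (Fin 2) R) * monomial u a = monomial u (π * a) :=
      C_mul_monomial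
    rw [sub_mul, h1, h2, map_sub, red_monomial, red_monomial]
    have e0 : ((Finsupp.single 0 1 + Finsupp.single 1 1 + u : Fin 2 →₀ ℕ) 0) = u 0 + 1 := by
      simp [Finsupp.add_apply, Finsupp.single_apply]; ring
    have e1 : ((Finsupp.single 0 1 + Finsupp.single 1 1 + u : Fin 2 →₀ ℕ) 1) = u 1 + 1 := by
      simp [Finsupp.add_apply, Finsupp.single_apply]; ring
    rw [e0, e1]
    have : min (u 0 + 1) (u 1 + 1) = min (u 0) (u 1) + 1 := by omega
    rw [this]
    have : ((u 0 + 1 : ℕ) : ℤ) - ((u 1 + 1 : ℕ) : ℤ) = (u 0 : ℤ) - (u 1 : ℤ) := by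
      push_cast; ring
    rw [this, pow_succ]
    rw [sub_eq_zero]
    congr 1
    ring

/-- candidate basis vectors -/
noncomputable def bb (n : ℤ) : MvPolynomial (Fin 2) R ⧸ stIdeal R π :=
  Ideal.Quotient.mk (stIdeal R π)
    (if 0 ≤ n then (X 0 : MvPolynomial (Fin 2) R) ^ n.toNat
      else (X 1 : MvPolynomial (Fin 2) R) ^ (-n).toNat)

noncomputable def g : (ℤ →₀ R) →ₗ[R] MvPolynomial (Fin 2) R ⧸ stIdeal R π :=
  Finsupp.linearCombination R (bb π)

noncomputable def fbar : (MvPolynomial (Fin 2) R ⧸ stIdeal R π) →ₗ[R] (ℤ →₀ R) :=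
  (Submodule.liftQ ((stIdeal R π).restrictScalars R) (red π) (red_ideal π)) ∘ₗ
    (Submodule.Quotient.restrictScalarsEquiv R (stIdeal R π)).symm.toLinearMap

lemma fbar_mk (p : MvPolynomial (Fin 2) R) :
    fbar π (Ideal.Quotient.mk (stIdeal R π) p) = red π p := by
  rw [fbar, LinearMap.comp_apply, LinearEquiv.coe_coe, ← Ideal.Quotient.mk_eq_mk,
    Submodule.Quotient.restrictScalarsEquiv_symm_mk]
  exact Submodule.liftQ_apply _ _ _

lemma mk_st : Ideal.Quotient.mk (stIdeal R π) (X 0 * X 1) =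
    Ideal.Quotient.mk (stIdeal R π) (C π) := by
  rw [Ideal.Quotient.mk_eq_mk_iff_sub_mem, stIdeal, Ideal.mem_span_singleton]

lemma smul_mk (c : R) (p : MvPolynomial (Fin 2) R) :
    c • Ideal.Quotient.mk (stIdeal R π) p =
      Ideal.Quotient.mk (stIdeal R π) (C c * p) := by
  rw [← smul_eq_C_mul]
  exact ((Ideal.Quotient.mkₐ R (stIdeal R π)).toLinearMap.map_smul c p).symm

lemma mk_pow_pow (a b : ℕ) :
    Ideal.Quotient.mk (stIdeal R π) ((X 0 : MvPolynomial (Fin 2) R) ^ a * X 1 ^ b) =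
      π ^ min a b • bb π ((a : ℤ) - b) := by
  rcases le_total a b with h | h
  · have hmin : min a b = a := min_eq_left h
    have hb : b = a + (b - a) := by omega
    have hbb : bb π ((a : ℤ) - b) =
        Ideal.Quotient.mk (stIdeal R π) ((X 1 : MvPolynomial (Fin 2) R) ^ (b - a)) := by
      rcases eq_or_lt_of_le h with rfl | h'
      · simp [bb]
      · rw [bb, if_neg (by omega)]
        congr 1
        congr 1
        omega
    rw [hbb, hmin, smul_mk]
    have hsp : (X 0 : MvPolynomial (Fin 2) R) ^ a * X 1 ^ b =
        (X 0 * X 1) ^ a * X 1 ^ (b - a) := by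
      rw [mul_pow, mul_assoc, ← pow_add]
      congr 2
    rw [hsp, map_mul, map_pow, mk_st, ← map_pow, ← map_mul, ← C_pow]
  · have hmin : min a b = b := min_eq_right h
    have ha : a = b + (a - b) := by omega
    have hbb : bb π ((a : ℤ) - b) =
        Ideal.Quotient.mk (stIdeal R π) ((X 0 : MvPolynomial (Fin 2) R) ^ (a - b)) := by
      rw [bb, if_pos (by omega)]
      congr 2
      omega
    rw [hbb, hmin, smul_mk]
    have hsp : (X 0 : MvPolynomial (Fin 2) R) ^ a * X 1 ^ b =
        (X 0 * X 1) ^ b * X 0 ^ (a - b) := by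
      rw [mul_pow, show (X 0 : MvPolynomial (Fin 2) R) ^ b * X 1 ^ b * X 0 ^ (a - b) =
        X 0 ^ b * X 0 ^ (a - b) * X 1 ^ b by ring, ← pow_add]
      congr 2
    rw [hsp, map_mul, map_pow, mk_st, ← map_pow, ← map_mul, ← C_pow]

lemma mk_monomial (d : Fin 2 →₀ ℕ) (r : R) :
    Ideal.Quotient.mk (stIdeal R π) (monomial d r) =
      (π ^ min (d 0) (d 1) * r) • bb π ((d 0 : ℤ) - (d 1 : ℤ)) := by
  have hsplit : d = Finsupp.single 0 (d 0) + Finsupp.single 1 (d 1) := by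
    ext i
    fin_cases i <;> simp [Finsupp.add_apply, Finsupp.single_apply]
  have hd : monomial d r = C r * ((X 0 : MvPolynomial (Fin 2) R) ^ (d 0) * X 1 ^ (d 1)) := by
    rw [X_pow_eq_monomial, X_pow_eq_monomial, monomial_mul, one_mul, C_mul_monomial, mul_one,
      ← hsplit]
  rw [hd, ← smul_mk, mk_pow_pow, smul_smul, mul_comm r _]

lemma gf : (g π).comp (fbar π) = LinearMap.id := by
  apply LinearMap.ext
  intro x
  obtain ⟨p, rfl⟩ := Ideal.Quotient.mk_surjective x
  rw [LinearMap.comp_apply, LinearMap.id_apply, fbar_mk]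
  induction p using MvPolynomial.induction_on' with
  | add p q hp hq => rw [map_add, map_add, hp, hq, map_add]
  | monomial u a =>
    rw [red_monomial, g, Finsupp.linearCombination_single, mk_monomial]

lemma fg : (fbar π).comp (g π) = LinearMap.id := by
  apply Finsupp.lhom_ext
  intro n c
  rw [LinearMap.comp_apply, LinearMap.id_apply, g, Finsupp.linearCombination_single,
    map_smul, bb, fbar_mk]
  split_ifs with h
  · rw [X_pow_eq_monomial, red_monomial]
    have h0 : ((Finsupp.single (0 : Fin 2) n.toNat) 0) = n.toNat := by simp
    have h1 : ((Finsupp.single (0 : Fin 2) n.toNat) 1) = 0 := by simp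
    rw [h0, h1, Nat.min_zero, pow_zero, one_mul, Nat.cast_zero, sub_zero,
      Int.toNat_of_nonneg h, Finsupp.smul_single, smul_eq_mul, mul_one]
  · rw [X_pow_eq_monomial, red_monomial]
    have h0 : ((Finsupp.single (1 : Fin 2) (-n).toNat) 0) = 0 := by simp
    have h1 : ((Finsupp.single (1 : Fin 2) (-n).toNat) 1) = (-n).toNat := by simp
    have h2 : (0 : ℤ) - ((-n).toNat : ℤ) = n := by omega
    rw [h0, h1, Nat.zero_min, pow_zero, one_mul, Nat.cast_zero, zero_sub,
      show -((-n).toNat : ℤ) = n by omega, Finsupp.smul_single, smul_eq_mul, mul_one]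

end StProof

open StProof in
/-- Let `R` be a commutative ring and `π ∈ R`. The quotient ring
`A = R[s, t]/(st − π)` is a free `R`-module with basis
`{1} ∪ {sᵃ : a ≥ 1} ∪ {tᵇ : b ≥ 1}` (indexed by `ℤ`, with `n ≥ 0` corresponding
to `sⁿ` and `n < 0` to `t⁻ⁿ`).  In particular, with the `ℤ`-grading where `s`
has degree `1` and `t` has degree `−1`, the degree-`0` component of `A` (the
image of the span of the degree-`0` monomials `(st)ᵃ`) is exactly the image of
`R`. -/
theorem stmt_14 (R : Type*) [CommRing R] (π : R) :
    (∃ B : Module.Basis ℤ R (MvPolynomial (Fin 2) R ⧸ stIdeal R π),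
      ∀ n : ℤ, B n = Ideal.Quotient.mk (stIdeal R π)
        (if 0 ≤ n then (X 0 : MvPolynomial (Fin 2) R) ^ n.toNat
          else (X 1 : MvPolynomial (Fin 2) R) ^ (-n).toNat)) ∧
    Submodule.map (Ideal.Quotient.mkₐ R (stIdeal R π)).toLinearMap
        (Submodule.span R
          (Set.range fun a : ℕ => ((X 0 : MvPolynomial (Fin 2) R) * X 1) ^ a)) =
      LinearMap.range (Algebra.linearMap R (MvPolynomial (Fin 2) R ⧸ stIdeal R π)) := by
  constructor
  · refine ⟨Module.Basis.ofRepr (LinearEquiv.ofLinear (fbar π) (g π) (fg π) (gf π)), fun n => ?_⟩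
    have := Module.Basis.repr_symm_single_one
      (Module.Basis.ofRepr (LinearEquiv.ofLinear (fbar π) (g π) (fg π) (gf π))) n
    rw [← this]
    show (LinearEquiv.ofLinear (fbar π) (g π) (fg π) (gf π)).symm (Finsupp.single n 1) = _
    rw [LinearEquiv.ofLinear_symm_apply, g, Finsupp.linearCombination_single, one_smul, bb]
  · apply le_antisymm
    · rw [Submodule.map_span, Submodule.span_le]
      rintro _ ⟨_, ⟨a, rfl⟩, rfl⟩
      refine ⟨π ^ a, ?_⟩
      simp only [AlgHom.toLinearMap_apply, Ideal.Quotient.mkₐ_eq_mk, Algebra.linearMap_apply]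
      rw [show (algebraMap R (MvPolynomial (Fin 2) R ⧸ stIdeal R π)) (π ^ a)
        = Ideal.Quotient.mk (stIdeal R π) (C (π ^ a)) from rfl,
        C_pow, map_pow, map_pow, mk_st]
    · rintro _ ⟨r, rfl⟩
      rw [Algebra.linearMap_apply,
        show (algebraMap R (MvPolynomial (Fin 2) R ⧸ stIdeal R π)) r
          = Ideal.Quotient.mk (stIdeal R π) (C r) from rfl]
      refine ⟨C r, ?_, rfl⟩
      have : (C r : MvPolynomial (Fin 2) R) = r • ((X 0 * X 1) ^ 0 : MvPolynomial (Fin 2) R) := by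
        rw [pow_zero, smul_eq_C_mul, mul_one]
      rw [this]
      exact Submodule.smul_mem _ r (Submodule.subset_span ⟨0, rfl⟩)
end
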